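/- Let G be an infinite, locally finite, strongly connected, quasi-transitive, unimodular directed graph. Then μ = μ^F = μ^B = μ^{FB}, i.e., the connective constants for all SAWs, forward extendable, backward extendable, and doubly extendable SAWs coincide. -/

import Mathlib

open Filter ENNReal

structure Dgraph where
  V : Type
  E : Type
  src : E → V
  tgt : E → V

namespace Dgraph

variable (G : Dgraph)

/-- Every vertex has finite in-degree and out-degree. -/
def LocallyFinite : Prop :=
  ∀ v : G.V, {e : G.E | G.src e = v}.Finite ∧ {e : G.E | G.tgt e = v}.Finite

/-- There is a directed edge from `u` to `v`. -/
def Adj (u v : G.V) : Prop := ∃ e : G.E, G.src e = u ∧ G.tgt e = v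

/-- Directed walks exist between any ordered pair of vertices. -/
def StronglyConnected : Prop := ∀ u v : G.V, Relation.ReflTransGen G.Adj u v

/-- An automorphism of a directed multigraph. -/
structure Aut where
  vmap : G.V ≃ G.V
  emap : G.E ≃ G.E
  src_eq : ∀ e, G.src (emap e) = vmap (G.src e)
  tgt_eq : ∀ e, G.tgt (emap e) = vmap (G.tgt e)

/-- `u` and `v` are in the same transitivity class. -/
def SameOrbit (u v : G.V) : Prop := ∃ φ : G.Aut, φ.vmap u = v

/-- Finitely many transitivity classes. -/
def QuasiTransitive : Prop := ∃ S : Finset G.V, ∀ v : G.V, ∃ s ∈ S, G.SameOrbit s v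

def VertexTransitive : Prop := ∀ u v : G.V, G.SameOrbit u v

/-- The orbit of `v` under the stabiliser of `u`. -/
def stabOrbit (u v : G.V) : Set G.V := {w | ∃ φ : G.Aut, φ.vmap u = u ∧ φ.vmap v = w}

/-- Unimodularity: the weight function is constant on transitivity classes,
equivalently `|stab(u)v| = |stab(v)u|` whenever `u, v` are in the same orbit. -/
def Unimodular : Prop := ∀ u v : G.V, G.SameOrbit u v →
  Nat.card (G.stabOrbit u v) = Nat.card (G.stabOrbit v u)

/-- The edge-reversal of `G`. -/
def rev : Dgraph := ⟨G.V, G.E, G.tgt, G.src⟩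

/-- Each edge has a reverse edge: `G` represents an undirected graph. -/
def Undirected : Prop := ∃ ι : G.E ≃ G.E, ∀ e : G.E,
  G.src (ι e) = G.tgt e ∧ G.tgt (ι e) = G.src e ∧ ι (ι e) = e

/-- An `n`-step self-avoiding walk starting at `v`, directed away from `v`. -/
@[ext]
structure SAW (n : ℕ) (v : G.V) where
  vs : Fin (n + 1) → G.V
  es : Fin n → G.E
  hsrc : ∀ i : Fin n, G.src (es i) = vs i.castSucc
  htgt : ∀ i : Fin n, G.tgt (es i) = vs i.succ
  hstart : vs 0 = v
  hinj : Function.Injective vs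

/-- `w` is an initial segment of a singly infinite SAW from `v`. -/
def IsFwdExt {n : ℕ} {v : G.V} (w : G.SAW n v) : Prop :=
  ∃ (vs : ℕ → G.V) (es : ℕ → G.E), Function.Injective vs ∧
    (∀ i : ℕ, G.src (es i) = vs i ∧ G.tgt (es i) = vs (i + 1)) ∧
    (∀ i : Fin (n + 1), vs i = w.vs i) ∧ (∀ i : Fin n, es i = w.es i)

/-- `w` is the final segment of a singly infinite SAW from infinity ending at the
endpoint of `w` (indexed backwards from the endpoint). -/
def IsBwdExt {n : ℕ} {v : G.V} (w : G.SAW n v) : Prop :=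
  ∃ (vs : ℕ → G.V) (es : ℕ → G.E), Function.Injective vs ∧
    (∀ i : ℕ, G.src (es i) = vs (i + 1) ∧ G.tgt (es i) = vs i) ∧
    (∀ i : Fin (n + 1), vs (n - (i : ℕ)) = w.vs i) ∧
    (∀ i : Fin n, es (n - 1 - (i : ℕ)) = w.es i)

/-- `w` is a sub-walk of a doubly infinite SAW. -/
def IsDblExt {n : ℕ} {v : G.V} (w : G.SAW n v) : Prop :=
  ∃ (vs : ℤ → G.V) (es : ℤ → G.E), Function.Injective vs ∧
    (∀ i : ℤ, G.src (es i) = vs i ∧ G.tgt (es i) = vs (i + 1)) ∧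
    ∃ k : ℤ, (∀ i : Fin (n + 1), vs (k + (i : ℕ)) = w.vs i) ∧
      (∀ i : Fin n, es (k + (i : ℕ)) = w.es i)

noncomputable def sigma (n : ℕ) (v : G.V) : ℕ := Nat.card (G.SAW n v)
noncomputable def sigmaF (n : ℕ) (v : G.V) : ℕ := Nat.card {w : G.SAW n v // G.IsFwdExt w}
noncomputable def sigmaB (n : ℕ) (v : G.V) : ℕ := Nat.card {w : G.SAW n v // G.IsBwdExt w}
noncomputable def sigmaFB (n : ℕ) (v : G.V) : ℕ := Nat.card {w : G.SAW n v // G.IsDblExt w}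

noncomputable def ssigma (n : ℕ) : ℝ≥0∞ := ⨆ v : G.V, (G.sigma n v : ℝ≥0∞)
noncomputable def ssigmaF (n : ℕ) : ℝ≥0∞ := ⨆ v : G.V, (G.sigmaF n v : ℝ≥0∞)
noncomputable def ssigmaB (n : ℕ) : ℝ≥0∞ := ⨆ v : G.V, (G.sigmaB n v : ℝ≥0∞)
noncomputable def ssigmaFB (n : ℕ) : ℝ≥0∞ := ⨆ v : G.V, (G.sigmaFB n v : ℝ≥0∞)

/-- Undirected graph distance: length of a shortest path ignoring orientations. -/
noncomputable def udist (u v : G.V) : ℕ :=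
  sInf {n : ℕ | ∃ f : Fin (n + 1) → G.V, f 0 = u ∧ f (Fin.last n) = v ∧
    ∀ i : Fin n, (∃ e, G.src e = f i.castSucc ∧ G.tgt e = f i.succ) ∨
      (∃ e, G.src e = f i.succ ∧ G.tgt e = f i.castSucc)}

end Dgraph

open Filter ENNReal

attribute [local instance] Classical.propDecidable

/-!
Every doubly extendable SAW is forward and backward extendable, so `σᶠᵇₙ ≤ σᶠₙ, σᵇₙ ≤ σₙ`.
Conversely, cut a SAW of length `2 T + n j` into a head and a tail of length `T` and `j` blocks
of length `n`: each block extends by at least `T` steps on both sides inside the walk. By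
Kőnig's lemma, for `T` large every `n`-step SAW extendable by `T` steps on both sides lies on a
doubly infinite SAW, and quasi-transitivity makes `T` uniform in the starting vertex. Hence
`σ_{2T+nj} ≤ σ_T² (σᶠᵇₙ)^j`, so Fekete's limit `μ` of `σₙ^{1/n}` satisfies `μ ≤ (σᶠᵇₙ)^{1/n}` for
every `n`, which squeezes all four sequences to `μ`.
-/

open Topology

lemma natCard_le_natCard_mul_of_fiber {α β : Type*} [Finite α] [Finite β] (f : α → β)
    {c : ℝ≥0∞} (hc : ∀ b, (Nat.card {a // f a = b} : ℝ≥0∞) ≤ c) :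
    (Nat.card α : ℝ≥0∞) ≤ Nat.card β * c := by
  have := Fintype.ofFinite β
  calc (Nat.card α : ℝ≥0∞) = ∑ b, (Nat.card {a // f a = b} : ℝ≥0∞) := by
        rw [← Nat.card_congr (Equiv.sigmaFiberEquiv f), Nat.card_sigma, Nat.cast_sum]
    _ ≤ ∑ _b : β, c := Finset.sum_le_sum fun b _ => hc b
    _ = Nat.card β * c := by
        rw [Finset.sum_const, nsmul_eq_mul, Finset.card_univ, Nat.card_eq_fintype_card]

section GrowthRate

lemma ENNReal.rpow_eq_ofReal_exp_log_mul {x : ℝ≥0∞} (h0 : x ≠ 0) (htop : x ≠ ⊤) (p : ℝ) :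
    x ^ p = ENNReal.ofReal (Real.exp (Real.log x.toReal * p)) := by
  have hx : 0 < x.toReal := ENNReal.toReal_pos h0 htop
  rw [← ENNReal.ofReal_toReal htop, ENNReal.ofReal_rpow_of_pos hx, Real.rpow_def_of_pos hx,
    ENNReal.toReal_ofReal hx.le]

/-- Fekete's lemma for submultiplicative sequences. -/
lemma exists_tendsto_rpow_inv_of_submultiplicative {a : ℕ → ℝ≥0∞} (h1 : ∀ n, 1 ≤ a n)
    (htop : ∀ n, a n ≠ ⊤) (hmul : ∀ m k, a (m + k) ≤ a m * a k) :
    ∃ μ, Tendsto (fun n : ℕ => a n ^ (1 / (n : ℝ))) atTop (𝓝 μ) := by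
  have h1' (n : ℕ) : 1 ≤ (a n).toReal := by
    simpa using ENNReal.toReal_mono (htop n) (h1 n)
  let u (n : ℕ) := Real.log (a n).toReal
  have hsub : Subadditive u := fun m k => by
    calc u (m + k) ≤ Real.log ((a m).toReal * (a k).toReal) := by
          refine Real.log_le_log (by linarith [h1' (m + k)]) ?_
          rw [← ENNReal.toReal_mul]
          exact ENNReal.toReal_mono (ENNReal.mul_ne_top (htop m) (htop k)) (hmul m k)
      _ = u m + u k := Real.log_mul (by linarith [h1' m]) (by linarith [h1' k])
  have hbdd : BddBelow (Set.range fun n => u n / n) :=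
    ⟨0, by rintro _ ⟨n, rfl⟩; exact div_nonneg (Real.log_nonneg (h1' n)) n.cast_nonneg⟩
  refine ⟨ENNReal.ofReal (Real.exp hsub.lim), ?_⟩
  have hu (n : ℕ) : a n ^ (1 / (n : ℝ)) = ENNReal.ofReal (Real.exp (u n / n)) := by
    rw [ENNReal.rpow_eq_ofReal_exp_log_mul (zero_lt_one.trans_le (h1 n)).ne' (htop n), mul_one_div]
  simp only [hu]
  exact (ENNReal.continuous_ofReal.tendsto _).comp
    ((Real.continuous_exp.tendsto _).comp (hsub.tendsto_lim hbdd))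

lemma le_rpow_inv_of_tendsto {a : ℕ → ℝ≥0∞} {μ C b : ℝ≥0∞} {m n : ℕ}
    (ha : Tendsto (fun n : ℕ => a n ^ (1 / (n : ℝ))) atTop (𝓝 μ)) (hn : n ≠ 0) (hC0 : C ≠ 0)
    (hC : C ≠ ⊤) (hb : 1 ≤ b) (hab : ∀ j, a (m + n * j) ≤ C * b ^ j) :
    μ ≤ b ^ (1 / (n : ℝ)) := by
  have hN : Tendsto (fun j => m + n * j) atTop atTop :=
    tendsto_atTop_mono (fun j => (Nat.le_mul_of_pos_left j (Nat.pos_of_ne_zero hn)).trans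
      (Nat.le_add_left _ m)) tendsto_id
  have hexp : Tendsto (fun j => 1 / ((m + n * j : ℕ) : ℝ)) atTop (𝓝 0) :=
    tendsto_one_div_atTop_nhds_zero_nat.comp hN
  have hC1 : Tendsto (fun j => C ^ (1 / ((m + n * j : ℕ) : ℝ))) atTop (𝓝 1) := by
    lift C to NNReal using hC
    have hC0' : C ≠ 0 := by exact_mod_cast hC0
    simpa [ENNReal.coe_rpow_of_ne_zero hC0'] using
      ENNReal.tendsto_coe.2 ((tendsto_const_nhds (x := C)).nnrpow hexp (.inl hC0'))
  have hlim := ENNReal.Tendsto.mul_const hC1 (b := b ^ (1 / (n : ℝ))) (.inl one_ne_zero)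
  rw [one_mul] at hlim
  refine le_of_tendsto_of_tendsto (ha.comp hN) hlim (Eventually.of_forall fun j => ?_)
  have hj : (j : ℝ) * (1 / ((m + n * j : ℕ) : ℝ)) ≤ 1 / n := by
    rcases Nat.eq_zero_or_pos j with rfl | hpos
    · simp
    rw [mul_one_div, div_le_div_iff₀ (by positivity) (by positivity)]
    push_cast
    nlinarith
  calc a (m + n * j) ^ (1 / ((m + n * j : ℕ) : ℝ))
      ≤ (C * b ^ j) ^ (1 / ((m + n * j : ℕ) : ℝ)) := ENNReal.rpow_le_rpow (hab j) (by positivity)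
    _ = C ^ (1 / ((m + n * j : ℕ) : ℝ)) * b ^ ((j : ℝ) * (1 / ((m + n * j : ℕ) : ℝ))) := by
        rw [ENNReal.mul_rpow_of_nonneg _ _ (by positivity), ← ENNReal.rpow_natCast,
          ← ENNReal.rpow_mul]
    _ ≤ C ^ (1 / ((m + n * j : ℕ) : ℝ)) * b ^ (1 / (n : ℝ)) := by
        gcongr

lemma tendsto_rpow_inv_of_le_of_le {a b f : ℕ → ℝ≥0∞} {μ : ℝ≥0∞}
    (ha : Tendsto (fun n : ℕ => a n ^ (1 / (n : ℝ))) atTop (𝓝 μ))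
    (hb : ∀ n ≠ 0, μ ≤ b n ^ (1 / (n : ℝ))) (hbf : ∀ n, b n ≤ f n) (hfa : ∀ n, f n ≤ a n) :
    Tendsto (fun n : ℕ => f n ^ (1 / (n : ℝ))) atTop (𝓝 μ) :=
  tendsto_of_tendsto_of_tendsto_of_le_of_le' tendsto_const_nhds ha
    ((eventually_ne_atTop 0).mono fun n hn =>
      (hb n hn).trans (ENNReal.rpow_le_rpow (hbf n) (by positivity)))
    (Eventually.of_forall fun n => ENNReal.rpow_le_rpow (hfa n) (by positivity))

end GrowthRate

namespace Dgraph

variable {G : Dgraph} {N n : ℕ} {u v : G.V}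

section SAW

lemma SAW.src_es_mk (w : G.SAW n v) (i : ℕ) (h : i < n) :
    G.src (w.es ⟨i, h⟩) = w.vs ⟨i, by omega⟩ :=
  w.hsrc ⟨i, h⟩

lemma SAW.tgt_es_mk (w : G.SAW n v) (i : ℕ) (h : i < n) :
    G.tgt (w.es ⟨i, h⟩) = w.vs ⟨i + 1, by omega⟩ :=
  w.htgt ⟨i, h⟩

lemma SAW.vs_mk_zero (w : G.SAW n v) : w.vs ⟨0, by omega⟩ = v :=
  w.hstart

lemma SAW.vs_mk_congr (w : G.SAW n v) {i j : ℕ} (h : i = j) (hi : i < n + 1) (hj : j < n + 1) :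
    w.vs ⟨i, hi⟩ = w.vs ⟨j, hj⟩ := by
  subst h; rfl

lemma SAW.es_mk_congr (w : G.SAW n v) {i j : ℕ} (h : i = j) (hi : i < n) (hj : j < n) :
    w.es ⟨i, hi⟩ = w.es ⟨j, hj⟩ := by
  subst h; rfl

lemma SAW.ext_of_es {w w' : G.SAW n v} (h : ∀ i, w.es i = w'.es i) : w = w' := by
  have hvs : ∀ (j : ℕ) (hj : j < n + 1), w.vs ⟨j, hj⟩ = w'.vs ⟨j, hj⟩ := by
    intro j
    induction j with
    | zero => intro _; rw [w.vs_mk_zero, w'.vs_mk_zero]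
    | succ j ih =>
      intro hj
      rw [← w.tgt_es_mk j (by omega), ← w'.tgt_es_mk j (by omega), h]
  ext i
  · exact hvs i i.2
  · exact h i

instance : Subsingleton (G.SAW 0 v) :=
  ⟨fun _ _ => SAW.ext_of_es finZeroElim⟩

def SAW.cast (h : u = v) (w : G.SAW n u) : G.SAW n v := h ▸ w

lemma SAW.pred_cast {P : ∀ {v : G.V}, G.SAW n v → Prop} (h : u = v) {w : G.SAW n u} (hw : P w) :
    P (w.cast h) := by
  subst h; exact hw

@[simp] lemma SAW.cast_vs (h : u = v) (w : G.SAW n u) (i : Fin (n + 1)) :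
    (w.cast h).vs i = w.vs i := by
  subst h; rfl

@[simp] lemma SAW.cast_es (h : u = v) (w : G.SAW n u) (i : Fin n) :
    (w.cast h).es i = w.es i := by
  subst h; rfl

def SAW.sub (W : G.SAW N u) (o len : ℕ) (h : o + len ≤ N) :
    G.SAW len (W.vs ⟨o, by omega⟩) where
  vs i := W.vs ⟨o + i, by omega⟩
  es i := W.es ⟨o + i, by omega⟩
  hsrc i := W.src_es_mk (o + i) (by omega)
  htgt i := (W.tgt_es_mk (o + i) (by omega)).trans (W.vs_mk_congr (by rw [Fin.val_succ]; omega) _ _)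
  hstart := rfl
  hinj a b hab := Fin.ext (by simpa using W.hinj hab)

@[simp] lemma SAW.sub_vs (W : G.SAW N u) (o len : ℕ) (h : o + len ≤ N) (i : Fin (len + 1)) :
    (W.sub o len h).vs i = W.vs ⟨o + i, by omega⟩ := rfl

@[simp] lemma SAW.sub_es (W : G.SAW N u) (o len : ℕ) (h : o + len ≤ N) (i : Fin len) :
    (W.sub o len h).es i = W.es ⟨o + i, by omega⟩ := rfl

def SAW.take (w : G.SAW N v) (m : ℕ) (h : m ≤ N) : G.SAW m v :=
  (w.sub 0 m (by omega)).cast w.vs_mk_zero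

@[simp] lemma SAW.take_vs (w : G.SAW N v) (m : ℕ) (h : m ≤ N) (i : Fin (m + 1)) :
    (w.take m h).vs i = w.vs ⟨i, by omega⟩ := by
  rw [SAW.take, SAW.cast_vs, SAW.sub_vs]
  exact w.vs_mk_congr (zero_add _) _ _

@[simp] lemma SAW.take_es (w : G.SAW N v) (m : ℕ) (h : m ≤ N) (i : Fin m) :
    (w.take m h).es i = w.es ⟨i, by omega⟩ := by
  rw [SAW.take, SAW.cast_es, SAW.sub_es]
  exact w.es_mk_congr (zero_add _) _ _

end SAW

section Aut

def Aut.symm (φ : G.Aut) : G.Aut where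
  vmap := φ.vmap.symm
  emap := φ.emap.symm
  src_eq e := φ.vmap.injective (by rw [← φ.src_eq]; simp)
  tgt_eq e := φ.vmap.injective (by rw [← φ.tgt_eq]; simp)

def Aut.mapSAW (φ : G.Aut) (w : G.SAW n v) : G.SAW n (φ.vmap v) where
  vs i := φ.vmap (w.vs i)
  es i := φ.emap (w.es i)
  hsrc i := by rw [φ.src_eq, w.hsrc]
  htgt i := by rw [φ.tgt_eq, w.htgt]
  hstart := congrArg φ.vmap w.hstart
  hinj _ _ h := w.hinj (φ.vmap.injective h)

@[simp] lemma Aut.mapSAW_vs (φ : G.Aut) (w : G.SAW n v) (i : Fin (n + 1)) :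
    (φ.mapSAW w).vs i = φ.vmap (w.vs i) := rfl

@[simp] lemma Aut.mapSAW_es (φ : G.Aut) (w : G.SAW n v) (i : Fin n) :
    (φ.mapSAW w).es i = φ.emap (w.es i) := rfl

lemma natCard_saw_eq_of_sameOrbit {P : ∀ {v : G.V}, G.SAW n v → Prop}
    (hP : ∀ (φ : G.Aut) {v : G.V} (w : G.SAW n v), P w → P (φ.mapSAW w)) (h : G.SameOrbit u v) :
    Nat.card {w : G.SAW n u // P w} = Nat.card {w : G.SAW n v // P w} := by
  obtain ⟨φ, rfl⟩ := h
  refine Nat.card_congr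
    { toFun := fun w => ⟨φ.mapSAW w.1, hP φ w.1 w.2⟩
      invFun := fun w => ⟨(φ.symm.mapSAW w.1).cast (φ.vmap.symm_apply_apply u),
        SAW.pred_cast _ (hP φ.symm w.1 w.2)⟩
      left_inv := fun w => Subtype.ext (SAW.ext_of_es fun i => by simp [Aut.symm])
      right_inv := fun w => Subtype.ext (SAW.ext_of_es fun i => by simp [Aut.symm]) }

end Aut

section Extendable

def ContainsAt (W : G.SAW N u) (o : ℕ) (w : G.SAW n v) (h : o + n ≤ N) : Prop :=
  (∀ i : Fin (n + 1), W.vs ⟨o + i, by omega⟩ = w.vs i) ∧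
    ∀ i : Fin n, W.es ⟨o + i, by omega⟩ = w.es i

lemma containsAt_sub (W : G.SAW N u) (o : ℕ) (h : o + n ≤ N) :
    ContainsAt W o (W.sub o n h) h :=
  ⟨fun _ => rfl, fun _ => rfl⟩

def IsExtendable (a b : ℕ) (w : G.SAW n v) : Prop :=
  ∃ (N : ℕ) (u : G.V) (W : G.SAW N u) (o : ℕ) (h : o + n ≤ N),
    a ≤ o ∧ o + n + b ≤ N ∧ ContainsAt W o w h

lemma isExtendable_zero_zero (w : G.SAW n v) : IsExtendable 0 0 w :=
  ⟨n, v, w, 0, by omega, le_rfl, by omega,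
    fun i => w.vs_mk_congr (zero_add _) _ _, fun i => w.es_mk_congr (zero_add _) _ _⟩

lemma isExtendable_sub (W : G.SAW N u) (a b : ℕ) (h : a + n + b ≤ N) :
    IsExtendable a b (W.sub a n (by omega)) :=
  ⟨N, u, W, a, _, le_rfl, h, containsAt_sub W a _⟩

lemma IsExtendable.mono {a b a' b' : ℕ} {w : G.SAW n v} (h : IsExtendable a b w)
    (ha : a' ≤ a) (hb : b' ≤ b) : IsExtendable a' b' w := by
  obtain ⟨N, u, W, o, hN, hao, hbo, hc⟩ := h
  exact ⟨N, u, W, o, hN, by omega, by omega, hc⟩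

lemma IsExtendable.mapSAW {a b : ℕ} (φ : G.Aut) {w : G.SAW n v} (h : IsExtendable a b w) :
    IsExtendable a b (φ.mapSAW w) := by
  obtain ⟨N, u, W, o, hN, ha, hb, hvs, hes⟩ := h
  exact ⟨N, φ.vmap u, φ.mapSAW W, o, hN, ha, hb, fun i => by simp [hvs i],
    fun i => by simp [hes i]⟩

lemma IsExtendable.take {a b m k : ℕ} {w : G.SAW (m + k) v} (h : IsExtendable a b w) :
    IsExtendable a (k + b) (w.take m (Nat.le_add_right m k)) := by
  obtain ⟨N', u, W, o, hN, ha, hb, hvs, hes⟩ := h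
  exact ⟨N', u, W, o, by omega, ha, by omega, fun i => by simpa using hvs ⟨i, by omega⟩,
    fun i => by simpa using hes ⟨i, by omega⟩⟩

lemma IsExtendable.sub {a b m k : ℕ} {w : G.SAW (m + k) v} (h : IsExtendable a b w) :
    IsExtendable (a + m) b (w.sub m k le_rfl) := by
  obtain ⟨N', u, W, o, hN, ha, hb, hvs, hes⟩ := h
  refine ⟨N', u, W, o + m, by omega, by omega, by omega, fun i => ?_, fun i => ?_⟩
  · exact (W.vs_mk_congr (by dsimp only; omega) _ _).trans (hvs ⟨m + i, by omega⟩)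
  · exact (W.es_mk_congr (by dsimp only; omega) _ _).trans (hes ⟨m + i, by omega⟩)

lemma IsDblExt.mapSAW (φ : G.Aut) {w : G.SAW n v} (h : G.IsDblExt w) :
    G.IsDblExt (φ.mapSAW w) := by
  obtain ⟨vs, es, hinj, hedge, k, hv, he⟩ := h
  refine ⟨φ.vmap ∘ vs, φ.emap ∘ es, φ.vmap.injective.comp hinj, fun i => ?_, k,
    fun i => by simp [hv i], fun i => by simp [he i]⟩
  simp [φ.src_eq, φ.tgt_eq, hedge i]

end Extendable

section Finiteness

lemma LocallyFinite.finite_src_mem (hlf : G.LocallyFinite) {s : Set G.V} (hs : s.Finite) :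
    {e | G.src e ∈ s}.Finite :=
  (hs.biUnion fun x _ => (hlf x).1).subset fun _ he => Set.mem_biUnion he rfl

lemma LocallyFinite.finite_tgt_mem (hlf : G.LocallyFinite) {s : Set G.V} (hs : s.Finite) :
    {e | G.tgt e ∈ s}.Finite :=
  (hs.biUnion fun x _ => (hlf x).2).subset fun _ he => Set.mem_biUnion he rfl

/-- The ball of radius `k` around `v` in the graph with orientations forgotten. -/
def uball (v : G.V) : ℕ → Set G.V
  | 0 => {v}
  | k + 1 => uball v k ∪ G.tgt '' {e | G.src e ∈ uball v k} ∪ G.src '' {e | G.tgt e ∈ uball v k}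

lemma finite_uball (hlf : G.LocallyFinite) (v : G.V) : ∀ k, (G.uball v k).Finite
  | 0 => Set.finite_singleton v
  | k + 1 =>
    have ih := finite_uball hlf v k
    (ih.union ((hlf.finite_src_mem ih).image _)).union ((hlf.finite_tgt_mem ih).image _)

lemma uball_mono (v : G.V) : Monotone (G.uball v) :=
  monotone_nat_of_le_succ fun _ _ hx => .inl (.inl hx)

lemma mem_uball_self (v : G.V) (k : ℕ) : v ∈ G.uball v k :=
  uball_mono v (Nat.zero_le k) rfl

lemma tgt_mem_uball_succ {k : ℕ} {e : G.E} (h : G.src e ∈ G.uball v k) :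
    G.tgt e ∈ G.uball v (k + 1) :=
  .inl (.inr ⟨e, h, rfl⟩)

lemma src_mem_uball_succ {k : ℕ} {e : G.E} (h : G.tgt e ∈ G.uball v k) :
    G.src e ∈ G.uball v (k + 1) :=
  .inr ⟨e, h, rfl⟩

lemma SAW.vs_mem_uball_of_le (W : G.SAW N u) (d : ℕ) :
    ∀ (i : ℕ) (h : i + d ≤ N), W.vs ⟨i + d, by omega⟩ ∈ G.uball (W.vs ⟨i, by omega⟩) d ∧
      W.vs ⟨i, by omega⟩ ∈ G.uball (W.vs ⟨i + d, by omega⟩) d := by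
  induction d with
  | zero => exact fun i _ => ⟨rfl, rfl⟩
  | succ d ih =>
    intro i h
    constructor
    · rw [W.vs_mk_congr (show i + (d + 1) = i + d + 1 by omega) _ (by omega),
        ← W.tgt_es_mk (i + d) (by omega)]
      exact tgt_mem_uball_succ (by rw [W.src_es_mk]; exact (ih i (by omega)).1)
    · rw [← W.src_es_mk i (by omega)]
      refine src_mem_uball_succ ?_
      rw [W.tgt_es_mk, W.vs_mk_congr (show i + (d + 1) = i + 1 + d by omega)]
      exact (ih (i + 1) (by omega)).2

lemma SAW.vs_mem_uball (W : G.SAW N u) (o i : Fin (N + 1)) : W.vs i ∈ G.uball (W.vs o) N := by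
  rcases le_total (o : ℕ) i with h | h
  · have := (W.vs_mem_uball_of_le (i - o) o (by omega)).1
    rw [W.vs_mk_congr (show o + (i - o : ℕ) = i by omega) _ i.2] at this
    exact uball_mono _ (by omega) this
  · have := (W.vs_mem_uball_of_le (o - i) i (by omega)).2
    rw [W.vs_mk_congr (show i + (o - i : ℕ) = o by omega) _ o.2] at this
    exact uball_mono _ (by omega) this

lemma finite_saw_vs_eq (hlf : G.LocallyFinite) (o : Fin (N + 1)) (v : G.V) :
    Finite {p : Σ u, G.SAW N u // p.2.vs o = v} := by
  let B := G.uball v N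
  let E' := {e | G.src e ∈ B}
  have := (finite_uball hlf v N).to_subtype
  have := (hlf.finite_src_mem (finite_uball hlf v N)).to_subtype
  have hmem : ∀ (p : {p : Σ u, G.SAW N u // p.2.vs o = v}) (i : Fin (N + 1)), p.1.2.vs i ∈ B :=
    fun p i => by simpa only [B, p.2] using p.1.2.vs_mem_uball o i
  refine Finite.of_injective (β := B × (Fin N → E'))
    (fun p => (⟨p.1.1, p.1.2.hstart ▸ hmem p 0⟩,
      fun i => ⟨p.1.2.es i, show G.src _ ∈ B from p.1.2.hsrc i ▸ hmem p _⟩)) ?_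
  rintro ⟨⟨x, w⟩, hw⟩ ⟨⟨x', w'⟩, hw'⟩ h
  simp only [Prod.mk.injEq, Subtype.mk.injEq] at h
  obtain ⟨rfl, hes⟩ := h
  exact Subtype.ext (Sigma.ext rfl (heq_of_eq (SAW.ext_of_es fun i => congrArg Subtype.val
    (congrFun hes i))))

lemma finite_saw (hlf : G.LocallyFinite) (n : ℕ) (v : G.V) : Finite (G.SAW n v) :=
  have := finite_saw_vs_eq hlf (N := n) 0 v
  Finite.of_injective (fun w => (⟨⟨v, w⟩, w.hstart⟩ : {p : Σ u, G.SAW n u // p.2.vs 0 = v}))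
    fun _ _ h => eq_of_heq (Sigma.mk.inj_iff.mp (congrArg Subtype.val h)).2

end Finiteness

section Walks

def IsWalk (v u : G.V) (m : ℕ) (f : ℕ → G.V) : Prop :=
  f 0 = v ∧ f m = u ∧ ∀ i < m, G.Adj (f i) (f (i + 1))

lemma exists_isWalk_of_reflTransGen (h : Relation.ReflTransGen G.Adj v u) :
    ∃ m f, G.IsWalk v u m f := by
  induction h using Relation.ReflTransGen.head_induction_on with
  | refl => exact ⟨0, fun _ => u, rfl, rfl, by simp⟩
  | @head a b hab _ ih =>
    obtain ⟨m, f, hf0, hfm, hf⟩ := ih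
    refine ⟨m + 1, fun i => if i = 0 then a else f (i - 1), by simp, by simpa using hfm, ?_⟩
    rintro (_ | i) hi
    · simpa [hf0] using hab
    · simpa using hf i (by omega)

lemma IsWalk.cut_loop {m a b : ℕ} {f : ℕ → G.V} (hf : G.IsWalk v u m f) (hab : a < b)
    (hbm : b ≤ m) (hfab : f a = f b) :
    G.IsWalk v u (m - (b - a)) fun i => if i ≤ a then f i else f (i + (b - a)) := by
  obtain ⟨hf0, hfm, hadj⟩ := hf
  refine ⟨by simpa using hf0, ?_, fun i hi => ?_⟩
  · dsimp only
    split_ifs with h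
    · rw [show m - (b - a) = a by omega, hfab, show b = m by omega, hfm]
    · rw [show m - (b - a) + (b - a) = m by omega, hfm]
  · rcases lt_trichotomy i a with hia | rfl | hia
    · simpa [hia.le, Nat.succ_le_of_lt hia] using hadj i (by omega)
    · simpa [hfab, show i + 1 + (b - i) = b + 1 by omega] using hadj b (by omega)
    · simpa [hia.not_ge, show ¬ i + 1 ≤ a by omega, show i + 1 + (b - a) = i + (b - a) + 1 by omega]
        using hadj (i + (b - a)) (by omega)

lemma exists_isWalk_injOn (h : Relation.ReflTransGen G.Adj v u) :
    ∃ m f, G.IsWalk v u m f ∧ Set.InjOn f (Set.Iic m) := by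
  have hex : ∃ m f, G.IsWalk v u m f := exists_isWalk_of_reflTransGen h
  obtain ⟨f, hf⟩ := Nat.find_spec hex
  refine ⟨_, f, hf, fun a ha b hb hfab => ?_⟩
  by_contra hne
  wlog hab : a < b generalizing a b
  · exact this b hb a ha hfab.symm (Ne.symm hne) (by omega)
  exact Nat.find_min hex (by simp only [Set.mem_Iic] at hb; omega) ⟨_, hf.cut_loop hab hb hfab⟩

lemma IsWalk.mem_uball {m : ℕ} {f : ℕ → G.V} (hf : G.IsWalk v u m f) :
    ∀ i ≤ m, f i ∈ G.uball v i
  | 0, _ => hf.1 ▸ mem_uball_self v 0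
  | i + 1, hi => by
    obtain ⟨e, he, he'⟩ := hf.2.2 i (by omega)
    exact he' ▸ tgt_mem_uball_succ (he ▸ hf.mem_uball i (by omega))

/-- A shortest walk to a vertex outside `uball v n` starts with an `n`-step SAW. -/
lemma nonempty_saw (hinf : Infinite G.V) (hlf : G.LocallyFinite) (hsc : G.StronglyConnected)
    (n : ℕ) (v : G.V) : Nonempty (G.SAW n v) := by
  obtain ⟨u, hu⟩ := (finite_uball hlf v n).infinite_compl.nonempty
  obtain ⟨m, f, hf, hinj⟩ := exists_isWalk_injOn (hsc v u)
  have hnm : n < m := by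
    by_contra! hmn
    exact hu (uball_mono v hmn (hf.2.1 ▸ hf.mem_uball m le_rfl))
  have hadj (i : Fin n) := hf.2.2 i (by omega)
  exact ⟨{ vs := fun i => f i
           es := fun i => (hadj i).choose
           hsrc := fun i => (hadj i).choose_spec.1
           htgt := fun i => (hadj i).choose_spec.2
           hstart := hf.1
           hinj := fun a b h =>
             Fin.ext (hinj (Set.mem_Iic.2 (by omega)) (Set.mem_Iic.2 (by omega)) h) }⟩

end Walks

section Counting

lemma SAW.ext_of_take_of_sub {m k : ℕ} {w w' : G.SAW (m + k) v}
    (h₁ : w.take m (Nat.le_add_right m k) = w'.take m (Nat.le_add_right m k))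
    (h₂ : ∀ i, (w.sub m k le_rfl).es i = (w'.sub m k le_rfl).es i) : w = w' := by
  refine SAW.ext_of_es fun i => ?_
  by_cases hi : (i : ℕ) < m
  · simpa using congrArg (fun x : G.SAW m v => x.es ⟨i, hi⟩) h₁
  · have := h₂ ⟨i - m, by omega⟩
    simp only [SAW.sub_es] at this
    rwa [w.es_mk_congr (show m + (i - m) = i by omega) _ i.2,
      w'.es_mk_congr (show m + (i - m) = i by omega) _ i.2] at this

lemma natCard_saw_add_le (hlf : G.LocallyFinite) {m k : ℕ} {Q : G.SAW (m + k) v → Prop}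
    {Q₁ : G.SAW m v → Prop} {Q₂ : ∀ {u : G.V}, G.SAW k u → Prop}
    (h₁ : ∀ w, Q w → Q₁ (w.take m (Nat.le_add_right m k)))
    (h₂ : ∀ w, Q w → Q₂ (w.sub m k le_rfl)) :
    (Nat.card {w // Q w} : ℝ≥0∞) ≤
      Nat.card {w // Q₁ w} * ⨆ u, (Nat.card {w : G.SAW k u // Q₂ w} : ℝ≥0∞) := by
  have := finite_saw hlf (m + k) v
  have := finite_saw hlf m v
  let take : {w // Q w} → {w // Q₁ w} := fun w => ⟨_, h₁ w.1 w.2⟩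
  refine natCard_le_natCard_mul_of_fiber take fun w₁ =>
    le_trans ?_ (le_iSup _ (w₁.1.vs (Fin.last m)))
  have := finite_saw hlf k (w₁.1.vs (Fin.last m))
  have hbase (x : {x // take x = w₁}) : x.1.1.vs ⟨m, by omega⟩ = w₁.1.vs (Fin.last m) := by
    simpa [take] using congrArg (fun y : {w // Q₁ w} => y.1.vs (Fin.last m)) x.2
  refine Nat.cast_le.2 (Nat.card_le_card_of_injective
    (fun x => ⟨(x.1.1.sub m k le_rfl).cast (hbase x), SAW.pred_cast _ (h₂ _ x.1.2)⟩) ?_)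
  intro x y hxy
  refine Subtype.ext (Subtype.ext (SAW.ext_of_take_of_sub ?_ fun i => ?_))
  · exact congrArg Subtype.val (x.2.trans y.2.symm)
  · simpa using congrArg (fun z : {w // Q₂ w} => z.1.es i) hxy

noncomputable def ssigmaExt (G : Dgraph) (a b n : ℕ) : ℝ≥0∞ :=
  ⨆ v : G.V, (Nat.card {w : G.SAW n v // IsExtendable a b w} : ℝ≥0∞)

lemma ssigma_eq_ssigmaExt (n : ℕ) : G.ssigma n = G.ssigmaExt 0 0 n :=
  iSup_congr fun _ => by
    rw [sigma, Nat.card_congr (Equiv.subtypeUnivEquiv isExtendable_zero_zero)]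

lemma iSup_natCard_mono (hlf : G.LocallyFinite) {P Q : ∀ {v : G.V}, G.SAW n v → Prop}
    (h : ∀ {v : G.V} (w : G.SAW n v), P w → Q w) :
    ⨆ v, (Nat.card {w : G.SAW n v // P w} : ℝ≥0∞) ≤ ⨆ v, (Nat.card {w : G.SAW n v // Q w} : ℝ≥0∞) :=
  iSup_mono fun v => by
    have := finite_saw hlf n v
    exact Nat.cast_le.2 (Nat.card_le_card_of_injective _ (Subtype.impEmbedding _ _ h).injective)

lemma ssigmaExt_anti (hlf : G.LocallyFinite) {a b a' b' : ℕ} (ha : a' ≤ a) (hb : b' ≤ b) :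
    G.ssigmaExt a b n ≤ G.ssigmaExt a' b' n :=
  iSup_natCard_mono hlf fun _ hw => hw.mono ha hb

lemma ssigmaExt_add_le (hlf : G.LocallyFinite) (a b m k : ℕ) :
    G.ssigmaExt a b (m + k) ≤ G.ssigmaExt a (k + b) m * G.ssigmaExt (a + m) b k :=
  iSup_le fun v => (natCard_saw_add_le hlf (fun _ h => h.take) fun _ h => h.sub).trans
    (mul_le_mul_left (le_iSup (fun v => (Nat.card {w : G.SAW m v // IsExtendable a (k + b) w} :
      ℝ≥0∞)) v) _)

lemma ssigmaExt_mul_le_pow (hlf : G.LocallyFinite) (a b n : ℕ) :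
    ∀ k, G.ssigmaExt a b (n * k) ≤ G.ssigmaExt a b n ^ k
  | 0 => iSup_le fun v => by
      have := finite_saw hlf 0 v
      rw [Nat.mul_zero, pow_zero, ← Nat.cast_one, Nat.cast_le, Finite.card_le_one_iff_subsingleton]
      infer_instance
  | k + 1 => calc
      G.ssigmaExt a b (n * (k + 1)) ≤ G.ssigmaExt a (n * k + b) n * G.ssigmaExt (a + n) b (n * k) :=
        Nat.mul_succ n k ▸ add_comm (n * k) n ▸ ssigmaExt_add_le hlf a b n (n * k)
      _ ≤ G.ssigmaExt a b n * G.ssigmaExt a b n ^ k :=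
        mul_le_mul' (ssigmaExt_anti hlf le_rfl (by omega))
          ((ssigmaExt_anti hlf (by omega) le_rfl).trans (ssigmaExt_mul_le_pow hlf a b n k))
      _ = G.ssigmaExt a b n ^ (k + 1) := (pow_succ' _ _).symm

lemma ssigma_add_le (hlf : G.LocallyFinite) (m k : ℕ) :
    G.ssigma (m + k) ≤ G.ssigma m * G.ssigma k := by
  simp only [ssigma_eq_ssigmaExt]
  exact (ssigmaExt_add_le hlf 0 0 m k).trans
    (mul_le_mul' (ssigmaExt_anti hlf le_rfl (by omega)) (ssigmaExt_anti hlf (by omega) le_rfl))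

lemma one_le_ssigmaExt (hinf : Infinite G.V) (hlf : G.LocallyFinite) (hsc : G.StronglyConnected)
    (a b n : ℕ) : 1 ≤ G.ssigmaExt a b n := by
  obtain ⟨W⟩ := nonempty_saw hinf hlf hsc (a + n + b) (Classical.arbitrary G.V)
  set x := W.vs ⟨a, by omega⟩
  have := finite_saw hlf n x
  have : Nonempty {w : G.SAW n x // IsExtendable a b w} := ⟨⟨_, isExtendable_sub W a b le_rfl⟩⟩
  exact le_iSup_of_le x (Nat.one_le_cast.2 Nat.card_pos)

lemma one_le_ssigma (hinf : Infinite G.V) (hlf : G.LocallyFinite) (hsc : G.StronglyConnected)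
    (n : ℕ) : 1 ≤ G.ssigma n :=
  ssigma_eq_ssigmaExt n ▸ one_le_ssigmaExt hinf hlf hsc 0 0 n

lemma ssigma_ne_top (hqt : G.QuasiTransitive) (n : ℕ) :
    G.ssigma n ≠ ⊤ := by
  obtain ⟨S, hS⟩ := hqt
  refine ne_top_of_le_ne_top (b := ∑ s ∈ S, (G.sigma n s : ℝ≥0∞))
    (ENNReal.sum_ne_top.2 fun _ _ => ENNReal.natCast_ne_top _) (iSup_le fun v => ?_)
  obtain ⟨s, hs, hsv⟩ := hS v
  have hcard :=
    natCard_saw_eq_of_sameOrbit (n := n) (P := fun _ => True) (fun _ _ _ _ => trivial) hsv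
  simp only [Nat.card_congr (Equiv.subtypeUnivEquiv fun _ => trivial)] at hcard
  calc (G.sigma n v : ℝ≥0∞) = G.sigma n s := by rw [sigma, sigma, hcard]
    _ ≤ _ := Finset.single_le_sum (f := fun s => (G.sigma n s : ℝ≥0∞)) (fun _ _ => zero_le) hs

end Counting

section Konig

def TwoSidedExt (w : G.SAW n v) (j : ℕ) : Type :=
  {p : Σ u, G.SAW (n + 2 * j) u // ContainsAt p.2 j w (by omega)}

namespace TwoSidedExt

variable {w : G.SAW n v}

lemma finite (hlf : G.LocallyFinite) (w : G.SAW n v) (j : ℕ) : Finite (TwoSidedExt w j) := by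
  let o : Fin (n + 2 * j + 1) := ⟨j, by omega⟩
  have := finite_saw_vs_eq hlf o v
  exact Finite.of_injective (β := {p : Σ u, G.SAW (n + 2 * j) u // p.2.vs o = v})
    (fun q => ⟨q.1, (q.2.1 0).trans w.hstart⟩) fun _ _ h => Subtype.ext (Subtype.mk.inj h)

lemma nonempty {j : ℕ} (h : IsExtendable j j w) : Nonempty (TwoSidedExt w j) := by
  obtain ⟨N, u, W, o, hN, hjo, hb, hvs, hes⟩ := h
  refine ⟨⟨⟨_, W.sub (o - j) (n + 2 * j) (by omega)⟩, fun i => ?_, fun i => ?_⟩⟩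
  · exact (W.vs_mk_congr (by dsimp only; omega) _ _).trans (hvs i)
  · exact (W.es_mk_congr (by dsimp only; omega) _ _).trans (hes i)

def restrict {j : ℕ} (q : TwoSidedExt w (j + 1)) : TwoSidedExt w j :=
  ⟨⟨_, q.1.2.sub 1 (n + 2 * j) (by omega)⟩,
    fun i => (q.1.2.vs_mk_congr (by dsimp only; omega) _ _).trans (q.2.1 i),
    fun i => (q.1.2.es_mk_congr (by dsimp only; omega) _ _).trans (q.2.2 i)⟩

lemma restrict_vs {j : ℕ} (q : TwoSidedExt w (j + 1)) (x : ℕ) (hx : x < n + 2 * j + 1) :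
    q.restrict.1.2.vs ⟨x, hx⟩ = q.1.2.vs ⟨x + 1, by omega⟩ :=
  q.1.2.vs_mk_congr (Nat.add_comm 1 x) _ _

lemma restrict_es {j : ℕ} (q : TwoSidedExt w (j + 1)) (y : ℕ) (hy : y < n + 2 * j) :
    q.restrict.1.2.es ⟨y, hy⟩ = q.1.2.es ⟨y + 1, by omega⟩ :=
  q.1.2.es_mk_congr (Nat.add_comm 1 y) _ _

open CategoryTheory in
lemma exists_coherent (hlf : G.LocallyFinite) (h : ∀ j, IsExtendable j j w) :
    ∃ A : ∀ j, TwoSidedExt w j, ∀ j, (A (j + 1)).restrict = A j := by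
  let F := Functor.ofOpSequence (X := TwoSidedExt w) fun j => TypeCat.ofHom restrict
  have (j : ℕᵒᵖ) : Finite (F.obj j) := finite hlf w j.unop
  have (j : ℕᵒᵖ) : Nonempty (F.obj j) := nonempty (h j.unop)
  obtain ⟨s, hs⟩ := nonempty_sections_of_finite_inverse_system F
  refine ⟨fun j => s (Opposite.op j), fun j => ?_⟩
  have := hs (homOfLE (Nat.le_add_right j 1)).op
  rwa [Functor.ofOpSequence_map_homOfLE_succ] at this

variable {A : ∀ j, TwoSidedExt w j} (hA : ∀ j, (A (j + 1)).restrict = A j)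
include hA

lemma vs_eq_vs_add (d j x : ℕ) (hx : x < n + 2 * j + 1) :
    (A j).1.2.vs ⟨x, hx⟩ = (A (j + d)).1.2.vs ⟨x + d, by omega⟩ := by
  induction d with
  | zero => rfl
  | succ d ih => rw [ih, ← hA (j + d), restrict_vs]; rfl

lemma es_eq_es_add (d j y : ℕ) (hy : y < n + 2 * j) :
    (A j).1.2.es ⟨y, hy⟩ = (A (j + d)).1.2.es ⟨y + d, by omega⟩ := by
  induction d with
  | zero => rfl
  | succ d ih => rw [ih, ← hA (j + d), restrict_es]; rfl

lemma vs_natAbs_eq {t : ℤ} {j : ℕ} (hj : t.natAbs ≤ j) :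
    (A t.natAbs).1.2.vs ⟨(t + t.natAbs).toNat, by omega⟩ =
      (A j).1.2.vs ⟨(t + j).toNat, by omega⟩ := by
  obtain ⟨d, rfl⟩ := Nat.exists_eq_add_of_le hj
  rw [vs_eq_vs_add hA d]
  exact (A _).1.2.vs_mk_congr (by omega) _ _

lemma es_natAbs_eq {t : ℤ} {j : ℕ} (hj : t.natAbs + 1 ≤ j) :
    (A (t.natAbs + 1)).1.2.es ⟨(t + (t.natAbs + 1)).toNat, by omega⟩ =
      (A j).1.2.es ⟨(t + j).toNat, by omega⟩ := by
  obtain ⟨d, rfl⟩ := Nat.exists_eq_add_of_le hj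
  rw [es_eq_es_add hA d]
  exact (A _).1.2.es_mk_congr (by omega) _ _

lemma isDblExt : G.IsDblExt w := by
  refine ⟨fun t => (A t.natAbs).1.2.vs ⟨(t + t.natAbs).toNat, by omega⟩,
    fun t => (A (t.natAbs + 1)).1.2.es ⟨(t + (t.natAbs + 1)).toNat, by omega⟩,
    fun t t' htt => ?_, fun t => ?_, 0, fun i => ?_, fun i => ?_⟩
  · have hj := le_max_left t.natAbs t'.natAbs
    have hj' := le_max_right t.natAbs t'.natAbs
    simp only [vs_natAbs_eq hA hj, vs_natAbs_eq hA hj'] at htt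
    have := (A _).1.2.hinj htt
    simp only [Fin.mk.injEq] at this
    omega
  · have h₁ : t.natAbs ≤ t.natAbs + 1 := by omega
    have h₂ : (t + 1).natAbs ≤ t.natAbs + 1 := by omega
    simp only [vs_natAbs_eq hA h₁, vs_natAbs_eq hA h₂, SAW.src_es_mk, SAW.tgt_es_mk]
    exact ⟨rfl, (A _).1.2.vs_mk_congr (by omega) _ _⟩
  · have hi : ((0 : ℤ) + (i : ℕ)).natAbs ≤ n := by omega
    simp only [vs_natAbs_eq hA hi]
    exact ((A n).1.2.vs_mk_congr (by omega) _ _).trans ((A n).2.1 i)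
  · have hi : ((0 : ℤ) + (i : ℕ)).natAbs + 1 ≤ n := by omega
    simp only [es_natAbs_eq hA hi]
    exact ((A n).1.2.es_mk_congr (by omega) _ _).trans ((A n).2.2 i)

end TwoSidedExt

lemma isDblExt_of_forall_isExtendable (hlf : G.LocallyFinite) {w : G.SAW n v}
    (h : ∀ j, IsExtendable j j w) : G.IsDblExt w :=
  let ⟨_, hA⟩ := TwoSidedExt.exists_coherent hlf h
  TwoSidedExt.isDblExt hA

end Konig

section Stabilization

lemma exists_forall_isExtendable_imp_isDblExt (hlf : G.LocallyFinite) (n : ℕ) (v : G.V) :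
    ∃ T, ∀ w : G.SAW n v, IsExtendable T T w → G.IsDblExt w := by
  have := finite_saw hlf n v
  obtain ⟨T, hT⟩ := WellFoundedLT.antitone_chain_condition
    (f := fun j => {w : G.SAW n v | IsExtendable j j w}) fun i j hij _ hw => hw.mono hij hij
  refine ⟨T, fun w hw => isDblExt_of_forall_isExtendable hlf fun j => ?_⟩
  rcases le_total j T with hj | hj
  · exact hw.mono hj hj
  · exact (hT j hj).subset hw

lemma exists_ssigmaExt_le_ssigmaFB (hlf : G.LocallyFinite) (hqt : G.QuasiTransitive) (n : ℕ) :
    ∃ T, G.ssigmaExt T T n ≤ G.ssigmaFB n := by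
  choose T hT using exists_forall_isExtendable_imp_isDblExt hlf n
  obtain ⟨S, hS⟩ := hqt
  refine ⟨S.sup T, iSup_le fun v => ?_⟩
  obtain ⟨s, hs, hsv⟩ := hS v
  have := finite_saw hlf n s
  have hext := natCard_saw_eq_of_sameOrbit (n := n) (P := IsExtendable (S.sup T) (S.sup T))
    (fun φ _ _ h => h.mapSAW φ) hsv
  have hdbl :=
    natCard_saw_eq_of_sameOrbit (n := n) (P := G.IsDblExt) (fun φ _ _ h => h.mapSAW φ) hsv
  have hle : Nat.card {w : G.SAW n s // IsExtendable (S.sup T) (S.sup T) w} ≤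
      Nat.card {w : G.SAW n s // G.IsDblExt w} :=
    Nat.card_le_card_of_injective _ (Subtype.impEmbedding _ _ fun w hw =>
      hT s w (hw.mono (Finset.le_sup hs) (Finset.le_sup hs))).injective
  rw [← hext]
  exact le_iSup_of_le v (Nat.cast_le.2 (hle.trans hdbl.le))

end Stabilization

section Comparison

variable {w : G.SAW n v}

lemma IsDblExt.isFwdExt (h : G.IsDblExt w) : G.IsFwdExt w := by
  obtain ⟨vs, es, hinj, hedge, k, hv, he⟩ := h
  refine ⟨fun i => vs (k + i), fun i => es (k + i), fun a b hab => ?_, fun i => ?_, hv, he⟩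
  · have := hinj hab
    omega
  · exact ⟨(hedge (k + i)).1, (hedge (k + i)).2.trans (congrArg vs (by omega))⟩

lemma IsDblExt.isBwdExt (h : G.IsDblExt w) : G.IsBwdExt w := by
  obtain ⟨vs, es, hinj, hedge, k, hv, he⟩ := h
  refine ⟨fun i => vs (k + n - i), fun i => es (k + n - (i + 1)), fun a b hab => ?_,
    fun i => ⟨?_, ?_⟩, fun i => ?_, fun i => ?_⟩
  · have := hinj hab
    omega
  · exact (hedge _).1.trans (congrArg vs (by omega))
  · exact (hedge _).2.trans (congrArg vs (by omega))
  · exact (congrArg vs (by omega)).trans (hv i)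
  · exact (congrArg es (by omega)).trans (he i)

lemma ssigmaFB_le_ssigmaF (hlf : G.LocallyFinite) (n : ℕ) : G.ssigmaFB n ≤ G.ssigmaF n :=
  iSup_natCard_mono hlf fun _ h => h.isFwdExt

lemma ssigmaFB_le_ssigmaB (hlf : G.LocallyFinite) (n : ℕ) : G.ssigmaFB n ≤ G.ssigmaB n :=
  iSup_natCard_mono hlf fun _ h => h.isBwdExt

lemma ssigmaF_le_ssigma (hlf : G.LocallyFinite) (n : ℕ) : G.ssigmaF n ≤ G.ssigma n :=
  ssigma_eq_ssigmaExt n ▸ iSup_natCard_mono hlf fun w _ => isExtendable_zero_zero w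

lemma ssigmaB_le_ssigma (hlf : G.LocallyFinite) (n : ℕ) : G.ssigmaB n ≤ G.ssigma n :=
  ssigma_eq_ssigmaExt n ▸ iSup_natCard_mono hlf fun w _ => isExtendable_zero_zero w

end Comparison

lemma ssigma_le_mul_ssigmaExt_pow (hlf : G.LocallyFinite) (T n j : ℕ) :
    G.ssigma (2 * T + n * j) ≤ G.ssigma T ^ 2 * G.ssigmaExt T T n ^ j := by
  simp only [ssigma_eq_ssigmaExt]
  calc G.ssigmaExt 0 0 (2 * T + n * j)
      = G.ssigmaExt 0 0 (T + (n * j + T)) := by rw [show 2 * T + n * j = T + (n * j + T) by omega]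
    _ ≤ G.ssigmaExt 0 (n * j + T + 0) T *
          (G.ssigmaExt (0 + T) (T + 0) (n * j) * G.ssigmaExt (0 + T + n * j) 0 T) :=
        (ssigmaExt_add_le hlf 0 0 T (n * j + T)).trans
          (mul_le_mul_right (ssigmaExt_add_le hlf (0 + T) 0 (n * j) T) _)
    _ ≤ G.ssigmaExt 0 0 T * (G.ssigmaExt T T n ^ j * G.ssigmaExt 0 0 T) := by
        gcongr
        · exact ssigmaExt_anti hlf le_rfl (by omega)
        · exact (ssigmaExt_anti hlf (by omega) (by omega)).trans (ssigmaExt_mul_le_pow hlf T T n j)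
        · exact ssigmaExt_anti hlf (by omega) le_rfl
    _ = G.ssigmaExt 0 0 T ^ 2 * G.ssigmaExt T T n ^ j := by ring

lemma exists_ssigma_le_mul_ssigmaFB_pow (hlf : G.LocallyFinite) (hqt : G.QuasiTransitive)
    (n : ℕ) : ∃ T, ∀ j, G.ssigma (2 * T + n * j) ≤ G.ssigma T ^ 2 * G.ssigmaFB n ^ j := by
  obtain ⟨T, hT⟩ := exists_ssigmaExt_le_ssigmaFB hlf hqt n
  exact ⟨T, fun j => (ssigma_le_mul_ssigmaExt_pow hlf T n j).trans (by gcongr)⟩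

lemma one_le_ssigmaFB (hinf : Infinite G.V) (hlf : G.LocallyFinite) (hsc : G.StronglyConnected)
    (hqt : G.QuasiTransitive) (n : ℕ) : 1 ≤ G.ssigmaFB n :=
  let ⟨T, hT⟩ := exists_ssigmaExt_le_ssigmaFB hlf hqt n
  (one_le_ssigmaExt hinf hlf hsc T T n).trans hT

end Dgraph

theorem connective_constants_coincide_unimodular_general (G : Dgraph) (hinf : Infinite G.V)
    (hlf : G.LocallyFinite) (hsc : G.StronglyConnected) (hqt : G.QuasiTransitive) :
    ∃ μ μF μB μFB : ℝ≥0∞,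
      Tendsto (fun n : ℕ => (G.ssigma n) ^ (1 / (n : ℝ))) atTop (nhds μ) ∧
      Tendsto (fun n : ℕ => (G.ssigmaF n) ^ (1 / (n : ℝ))) atTop (nhds μF) ∧
      Tendsto (fun n : ℕ => (G.ssigmaB n) ^ (1 / (n : ℝ))) atTop (nhds μB) ∧
      Tendsto (fun n : ℕ => (G.ssigmaFB n) ^ (1 / (n : ℝ))) atTop (nhds μFB) ∧
      μ = μF ∧ μ = μB ∧ μ = μFB := by
  open Dgraph in
  obtain ⟨μ, hμ⟩ := exists_tendsto_rpow_inv_of_submultiplicative (one_le_ssigma hinf hlf hsc)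
    (ssigma_ne_top hqt) (ssigma_add_le hlf)
  have hFB (n : ℕ) (hn : n ≠ 0) : μ ≤ G.ssigmaFB n ^ (1 / (n : ℝ)) := by
    obtain ⟨T, hT⟩ := exists_ssigma_le_mul_ssigmaFB_pow hlf hqt n
    have hT0 : G.ssigma T ≠ 0 := (zero_lt_one.trans_le (one_le_ssigma hinf hlf hsc T)).ne'
    exact le_rpow_inv_of_tendsto hμ hn (pow_ne_zero 2 hT0) (pow_ne_top (ssigma_ne_top hqt T))
      (one_le_ssigmaFB hinf hlf hsc hqt n) hT
  have squeeze (f : ℕ → ℝ≥0∞) (hf : ∀ n, G.ssigmaFB n ≤ f n) (hf' : ∀ n, f n ≤ G.ssigma n) :=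
    tendsto_rpow_inv_of_le_of_le hμ hFB hf hf'
  exact ⟨μ, μ, μ, μ, hμ,
    squeeze _ (ssigmaFB_le_ssigmaF hlf) (ssigmaF_le_ssigma hlf),
    squeeze _ (ssigmaFB_le_ssigmaB hlf) (ssigmaB_le_ssigma hlf),
    squeeze _ (fun _ => le_rfl) fun n =>
      (ssigmaFB_le_ssigmaF hlf n).trans (ssigmaF_le_ssigma hlf n),
    rfl, rfl, rfl⟩

/-- for an infinite, locally finite, strongly connected, quasi-transitive,
unimodular directed graph, `μ = μ^F = μ^B = μ^{FB}`. -/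
theorem connective_constants_coincide_unimodular (G : Dgraph) (hinf : Infinite G.V)
    (hlf : G.LocallyFinite) (hsc : G.StronglyConnected) (hqt : G.QuasiTransitive)
    (huni : G.Unimodular) :
    ∃ μ μF μB μFB : ℝ≥0∞,
      Tendsto (fun n : ℕ => (G.ssigma n) ^ (1 / (n : ℝ))) atTop (nhds μ) ∧
      Tendsto (fun n : ℕ => (G.ssigmaF n) ^ (1 / (n : ℝ))) atTop (nhds μF) ∧
      Tendsto (fun n : ℕ => (G.ssigmaB n) ^ (1 / (n : ℝ))) atTop (nhds μB) ∧
      Tendsto (fun n : ℕ => (G.ssigmaFB n) ^ (1 / (n : ℝ))) atTop (nhds μFB) ∧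
      μ = μF ∧ μ = μB ∧ μ = μFB :=
  connective_constants_coincide_unimodular_general G hinf hlf hsc hqt
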